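/- Let (Λ_n)_{n≥0} be row-finite k-graphs with no sources and let p_n : Λ_n → Λ_{n−1} (n ≥ 1) be finite-to-one coverings. Then there is a homeomorphism π̃_∞ from the topological realization X_{lim←(Λ_n,p_n)} of the projective-limit topological k-graph onto the projective limit lim←(X_{Λ_n}, p̃_n) of the topological realizations along the induced covering maps p̃_n, satisfying π̃_∞([(λ_i)_{i≥0}, t]) = ([λ_i, t])_{i≥0}. -/

import Mathlib

/-- A `k`-graph: a countable small category (objects identified with the
identity morphisms, i.e. the morphisms of degree `0`) equipped with a degree
functor `d : Λ → ℕᵏ` satisfying the unique factorization property. -/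
structure KGraph (k : ℕ) where
  /-- The morphisms of the category. -/
  Mor : Type
  /-- The category is countable. -/
  countable : Countable Mor
  /-- The source (domain) of a morphism, viewed as a degree-zero morphism. -/
  src : Mor → Mor
  /-- The range (codomain) of a morphism, viewed as a degree-zero morphism. -/
  rng : Mor → Mor
  /-- Composition `comp a b = a ∘ b`, meaningful when `src a = rng b`. -/
  comp : Mor → Mor → Mor
  /-- The degree functor. -/
  deg : Mor → Fin k → ℕ
  src_src : ∀ a, src (src a) = src a
  rng_src : ∀ a, rng (src a) = src a
  src_rng : ∀ a, src (rng a) = rng a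
  rng_rng : ∀ a, rng (rng a) = rng a
  deg_src : ∀ a, deg (src a) = 0
  deg_rng : ∀ a, deg (rng a) = 0
  src_comp : ∀ a b, src a = rng b → src (comp a b) = src b
  rng_comp : ∀ a b, src a = rng b → rng (comp a b) = rng a
  comp_assoc : ∀ a b c, src a = rng b → src b = rng c →
    comp (comp a b) c = comp a (comp b c)
  id_comp : ∀ a, comp (rng a) a = a
  comp_id : ∀ a, comp a (src a) = a
  deg_comp : ∀ a b, src a = rng b → deg (comp a b) = deg a + deg b
  /-- The unique factorization property. -/
  factor : ∀ (a : Mor) (m n : Fin k → ℕ), deg a = m + n →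
    ∃! p : Mor × Mor, deg p.1 = m ∧ deg p.2 = n ∧ src p.1 = rng p.2 ∧
      comp p.1 p.2 = a

namespace KGraph

variable {k : ℕ} (Λ : KGraph k)

/-- The segment `a(m,n)` of a morphism `a`, i.e. the (unique) middle factor of
`a = a(0,m) a(m,n) a(n, d(a))`; junk value `a` if no such factorization exists. -/
noncomputable def seg (a : Λ.Mor) (m n : Fin k → ℕ) : Λ.Mor :=
  letI := Classical.propDecidable
  if h : ∃ b : Λ.Mor, Λ.deg b = n - m ∧ ∃ x y : Λ.Mor,
      Λ.deg x = m ∧ Λ.src x = Λ.rng b ∧ Λ.src b = Λ.rng y ∧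
      a = Λ.comp x (Λ.comp b y)
  then h.choose else a

/-- The points `⨆_{λ ∈ Λ} {λ} × [0, d(λ)]` of which the topological
realization is a quotient; topologized as a disjoint union of subspaces of `ℝᵏ`. -/
def Points : Type :=
  Σ a : Λ.Mor, { t : Fin k → ℝ // ∀ i, 0 ≤ t i ∧ t i ≤ (Λ.deg a i : ℝ) }

instance : TopologicalSpace Λ.Points :=
  inferInstanceAs (TopologicalSpace
    (Σ a : Λ.Mor, { t : Fin k → ℝ // ∀ i, 0 ≤ t i ∧ t i ≤ (Λ.deg a i : ℝ) }))

/-- Coordinatewise floor `⌊t⌋` (as a vector of naturals; this is the honest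
floor on the relevant region `t ≥ 0`). -/
noncomputable def fl (t : Fin k → ℝ) : Fin k → ℕ := fun i => (⌊t i⌋).toNat

/-- Coordinatewise ceiling `⌈t⌉`. -/
noncomputable def ce (t : Fin k → ℝ) : Fin k → ℕ := fun i => (⌈t i⌉).toNat

/-- The fractional part `t - ⌊t⌋`. -/
noncomputable def frac (t : Fin k → ℝ) : Fin k → ℝ := fun i => t i - ((⌊t i⌋).toNat : ℝ)

/-- The relation `(μ,s) ∼ (ν,t) ⟺ μ(⌊s⌋,⌈s⌉) = ν(⌊t⌋,⌈t⌉)` and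
`s - ⌊s⌋ = t - ⌊t⌋` defining the topological realization. -/
def ptRel : Λ.Points → Λ.Points → Prop := fun p q =>
  Λ.seg p.1 (fl p.2.1) (ce p.2.1) = Λ.seg q.1 (fl q.2.1) (ce q.2.1) ∧
    frac p.2.1 = frac q.2.1

/-- `ptRel` is an equivalence relation. -/
def ptSetoid : Setoid Λ.Points where
  r := Λ.ptRel
  iseqv := ⟨fun _ => ⟨rfl, rfl⟩, fun h => ⟨h.1.symm, h.2.symm⟩,
    fun h h' => ⟨h.1.trans h'.1, h.2.trans h'.2⟩⟩

/-- The topological realization `X_Λ` of the `k`-graph `Λ`. -/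
def Real : Type := Quotient Λ.ptSetoid

instance : TopologicalSpace Λ.Real :=
  inferInstanceAs (TopologicalSpace (Quotient Λ.ptSetoid))

/-- The class `[λ, t] ∈ X_Λ` of a pair `(λ, t)` with `0 ≤ t ≤ d(λ)`. -/
def pt (a : Λ.Mor) (t : Fin k → ℝ) (h : ∀ i, 0 ≤ t i ∧ t i ≤ (Λ.deg a i : ℝ)) :
    Λ.Real :=
  Quotient.mk Λ.ptSetoid ⟨a, ⟨t, h⟩⟩

/-- The open cube `Q_λ = {[λ,t] : t ∈ (0, d(λ))}` of a morphism `λ` (of degree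
`≤ (1,…,1)`). -/
def Qcube (lam : Λ.Mor) : Set Λ.Real :=
  { x | ∃ (t : Fin k → ℝ) (h : ∀ i, 0 ≤ t i ∧ t i ≤ (Λ.deg lam i : ℝ)),
      (∀ i, Λ.deg lam i = 1 → 0 < t i ∧ t i < 1) ∧ x = Λ.pt lam t h }

/-- The `r`-skeleton `X_Λ^r` of the topological realization. -/
def skel' (G : KGraph k) : ℕ → Set G.Real
  | 0 => ⋃ v ∈ { v : G.Mor | G.deg v = 0 }, G.Qcube v
  | (r+1) => skel' G r ∪
      ⋃ lam ∈ { lam : G.Mor | G.deg lam ≤ 1 ∧ ∑ i, G.deg lam i = r + 1 },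
        G.Qcube lam

/-- The `r`-skeleton (wrapper). -/
def skel (r : ℕ) : Set Λ.Real := skel' Λ r

/-- A `k`-graph is connected if any two vertices are joined by an undirected
path of morphisms. -/
def Connected : Prop :=
  ∀ u v : Λ.Mor, Λ.deg u = 0 → Λ.deg v = 0 →
    Relation.ReflTransGen (fun x y => ∃ e : Λ.Mor,
      (Λ.src e = x ∧ Λ.rng e = y) ∨ (Λ.src e = y ∧ Λ.rng e = x)) u v

end KGraph

/-- A morphism of `k`-graphs: a degree-preserving functor. -/
@[ext]
structure KGraphHom {k : ℕ} (Λ Γ : KGraph k) where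
  toFun : Λ.Mor → Γ.Mor
  map_src : ∀ a, toFun (Λ.src a) = Γ.src (toFun a)
  map_rng : ∀ a, toFun (Λ.rng a) = Γ.rng (toFun a)
  map_comp : ∀ a b, Λ.src a = Λ.rng b →
    toFun (Λ.comp a b) = Γ.comp (toFun a) (toFun b)
  map_deg : ∀ a, Γ.deg (toFun a) = Λ.deg a

namespace KGraphHom

variable {k : ℕ} {Λ Γ Θ : KGraph k}

/-- The identity `k`-graph morphism. -/
def id (Λ : KGraph k) : KGraphHom Λ Λ :=
  ⟨fun a => a, fun _ => rfl, fun _ => rfl, fun _ _ _ => rfl, fun _ => rfl⟩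

/-- Composition of `k`-graph morphisms. -/
def comp (ψ : KGraphHom Γ Θ) (φ : KGraphHom Λ Γ) : KGraphHom Λ Θ where
  toFun := ψ.toFun ∘ φ.toFun
  map_src a := by simp [Function.comp, φ.map_src, ψ.map_src]
  map_rng a := by simp [Function.comp, φ.map_rng, ψ.map_rng]
  map_comp a b h := by
    simp only [Function.comp]
    rw [φ.map_comp a b h, ψ.map_comp _ _ (by rw [← φ.map_src, ← φ.map_rng, h])]
  map_deg a := by simp [Function.comp, φ.map_deg, ψ.map_deg]

/-- The induced map on points `(λ, t) ↦ (φ(λ), t)`. -/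
def pointMap (φ : KGraphHom Λ Γ) : Λ.Points → Γ.Points :=
  fun p => ⟨φ.toFun p.1, ⟨p.2.1, fun i => by rw [φ.map_deg]; exact p.2.2 i⟩⟩

/-- The induced map `φ̃ : X_Λ → X_Γ` on topological realizations,
`φ̃([λ,t]) = [φ(λ), t]` (defined via choice of representatives). -/
noncomputable def real (φ : KGraphHom Λ Γ) : Λ.Real → Γ.Real :=
  fun x => Quotient.mk Γ.ptSetoid (φ.pointMap (Quotient.out x))

end KGraphHom

/-- A covering of `k`-graphs: a surjective degree-preserving functor
`p : Ω → Λ` mapping `Ωv` bijectively onto `Λp(v)` and `vΩ` bijectively onto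
`p(v)Λ` for every vertex `v` of `Ω`. -/
def KGraphHom.IsCovering {k : ℕ} {Ω Λ : KGraph k} (p : KGraphHom Ω Λ) : Prop :=
  Function.Surjective p.toFun ∧
    ∀ v : Ω.Mor, Ω.deg v = 0 →
      Set.BijOn p.toFun { a | Ω.src a = v } { b | Λ.src b = p.toFun v } ∧
      Set.BijOn p.toFun { a | Ω.rng a = v } { b | Λ.rng b = p.toFun v }

/-- A `k`-graph is row-finite with no sources if `0 < |vΛⁿ| < ∞` for every
vertex `v` and every `n ∈ ℕᵏ`. -/
def KGraph.RowFiniteNoSources {k : ℕ} (Λ : KGraph k) : Prop :=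
  ∀ (v : Λ.Mor) (m : Fin k → ℕ), Λ.deg v = 0 →
    ({ a : Λ.Mor | Λ.rng a = v ∧ Λ.deg a = m }.Finite ∧
      { a : Λ.Mor | Λ.rng a = v ∧ Λ.deg a = m }.Nonempty)

section Lim

variable {k : ℕ} (Λs : ℕ → KGraph k) (ps : ∀ n, KGraphHom (Λs (n+1)) (Λs n))

/-- The points `{((λ_n)_n, t) : p_n(λ_n) = λ_{n-1}, 0 ≤ t ≤ d(λ_0)}` of the
projective-limit topological `k`-graph `lim← (Λ_n, p_n)`, topologized as a
subspace of the product of the (discrete) spaces `Λ_n` and of `ℝᵏ`.  (All the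
`λ_n` have the same degree since coverings preserve degrees.) -/
def LimPoints : Type :=
  { ft : (∀ n, (Λs n).Mor) × (Fin k → ℝ) //
    (∀ n, (ps n).toFun (ft.1 (n + 1)) = ft.1 n) ∧
    ∀ i, 0 ≤ ft.2 i ∧ ft.2 i ≤ ((Λs 0).deg (ft.1 0) i : ℝ) }

instance : TopologicalSpace (LimPoints Λs ps) := by
  letI : ∀ n, TopologicalSpace (Λs n).Mor := fun _ => ⊥
  unfold LimPoints
  infer_instance

/-- The realization relation `∼` for the projective-limit topological
`k`-graph, whose structure maps (in particular factorizations, hence segments)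
are computed coordinatewise. -/
def limRel : LimPoints Λs ps → LimPoints Λs ps → Prop := fun p q =>
  (∀ n, (Λs n).seg (p.1.1 n) (KGraph.fl p.1.2) (KGraph.ce p.1.2) =
      (Λs n).seg (q.1.1 n) (KGraph.fl q.1.2) (KGraph.ce q.1.2)) ∧
  KGraph.frac p.1.2 = KGraph.frac q.1.2

/-- `limRel` as a setoid. -/
def limSetoid : Setoid (LimPoints Λs ps) where
  r := limRel Λs ps
  iseqv := ⟨fun _ => ⟨fun _ => rfl, rfl⟩,
    fun h => ⟨fun n => (h.1 n).symm, h.2.symm⟩,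
    fun h h' => ⟨fun n => (h.1 n).trans (h'.1 n), h.2.trans h'.2⟩⟩

/-- The topological realization `X_{lim←(Λ_n,p_n)}` of the projective-limit
topological `k`-graph. -/
def LimReal : Type := Quotient (limSetoid Λs ps)

instance : TopologicalSpace (LimReal Λs ps) :=
  inferInstanceAs (TopologicalSpace (Quotient (limSetoid Λs ps)))

/-- The class `[(λ_n)_n, t]` in `X_{lim←(Λ_n,p_n)}`. -/
def limPt (f : ∀ n, (Λs n).Mor) (hf : ∀ n, (ps n).toFun (f (n + 1)) = f n)
    (t : Fin k → ℝ) (ht : ∀ i, 0 ≤ t i ∧ t i ≤ ((Λs 0).deg (f 0) i : ℝ)) :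
    LimReal Λs ps :=
  Quotient.mk (limSetoid Λs ps) ⟨(f, t), hf, ht⟩

/-- The projective limit `lim← (X_{Λ_n}, p̃_n)` of the topological realizations
along the induced covering maps, topologized as a subspace of the product. -/
def RealLim : Type :=
  { x : ∀ n, (Λs n).Real // ∀ n, (ps n).real (x (n + 1)) = x n }

instance : TopologicalSpace (RealLim Λs ps) :=
  inferInstanceAs (TopologicalSpace
    { x : ∀ n, (Λs n).Real // ∀ n, (ps n).real (x (n + 1)) = x n })

end Lim

/-!
Every point `[λ, t]` of a realization has the canonical representative
`[λ(⌊t⌋, ⌈t⌉), t - ⌊t⌋]`, and `k`-graph morphisms commute with taking segments. Hence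
`[(λ_i)_i, t] ↦ ([λ_i, t])_i` is well defined and bijective: a compatible family of classes is
recovered from the chain of its canonical representatives. It is continuous because it is so on
representatives, whose morphism coordinates are locally constant.

For openness, let `U` be open in the realization of the limit and fix a level `N`. The set of
`x ∈ X_{Λ_N}` all of whose lifts to the limit lie in `U` is open: for `t'` near `t`, the canonical
representative of `[μ, t']` is a segment `μ(m, n)` with `m ≤ ⌊t⌋`, `⌈t⌉ ≤ n`, and the point
`[μ(m, n), t - m]` equals `[μ, t]`. There are finitely many such windows, and since the `p_n` are
finite-to-one, the points of the limit lying over `μ(m, n)` with real coordinate `t - m` form a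
compact set; so one radius in the real coordinate serves all of them. Finally, the open set `U`
contains, around a canonical point, all points agreeing with it at some level `N` with the same real
coordinate, so the image of `U` contains the preimage of such a set under the `N`-th projection.
-/

open Topology

namespace KGraph

variable {k : ℕ} {Λ : KGraph k}

/-- Morphisms carry the discrete topology, as in the definition of `LimPoints`. -/
instance instTopologicalSpaceMor : TopologicalSpace Λ.Mor := ⊥

instance : DiscreteTopology Λ.Mor := ⟨rfl⟩

/-- The relation `b = a(m, n)` that `seg` picks a witness of, free of its junk value. -/
def IsSegment (a : Λ.Mor) (m n : Fin k → ℕ) (b : Λ.Mor) : Prop :=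
  Λ.deg b = n - m ∧ ∃ x y : Λ.Mor, Λ.deg x = m ∧ Λ.src x = Λ.rng b ∧ Λ.src b = Λ.rng y ∧
    a = Λ.comp x (Λ.comp b y)

theorem eq_of_comp_eq_comp {x z x' z' : Λ.Mor} (hxz : Λ.src x = Λ.rng z)
    (hxz' : Λ.src x' = Λ.rng z') (hd : Λ.deg x = Λ.deg x')
    (h : Λ.comp x z = Λ.comp x' z') : x = x' ∧ z = z' := by
  have hdz : Λ.deg z = Λ.deg z' := by
    have := Λ.deg_comp x z hxz
    rw [h, Λ.deg_comp x' z' hxz', hd] at this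
    exact (add_left_cancel this).symm
  obtain ⟨_, -, huniq⟩ := Λ.factor _ _ _ (Λ.deg_comp x z hxz)
  exact Prod.mk.inj ((huniq (x, z) ⟨rfl, rfl, hxz, rfl⟩).trans
    (huniq (x', z') ⟨hd.symm, hdz.symm, hxz', h.symm⟩).symm)

theorem IsSegment.unique {a b b' : Λ.Mor} {m n : Fin k → ℕ} (hb : Λ.IsSegment a m n b)
    (hb' : Λ.IsSegment a m n b') : b = b' := by
  obtain ⟨hdb, x, y, hdx, hxb, hby, rfl⟩ := hb
  obtain ⟨hdb', x', y', hdx', hxb', hby', h⟩ := hb'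
  have hxby : Λ.src x = Λ.rng (Λ.comp b y) := by rw [Λ.rng_comp b y hby, hxb]
  have hxby' : Λ.src x' = Λ.rng (Λ.comp b' y') := by rw [Λ.rng_comp b' y' hby', hxb']
  have hby_eq := (eq_of_comp_eq_comp hxby hxby' (hdx.trans hdx'.symm) h).2
  exact (eq_of_comp_eq_comp hby hby' (hdb.trans hdb'.symm) hby_eq).1

theorem exists_isSegment (a : Λ.Mor) {m n : Fin k → ℕ} (hmn : m ≤ n) (hn : n ≤ Λ.deg a) :
    ∃ b, Λ.IsSegment a m n b := by
  obtain ⟨⟨x, z⟩, ⟨hdx, hdz, hxz, rfl⟩, -⟩ :=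
    Λ.factor a m (Λ.deg a - m) (add_tsub_cancel_of_le (hmn.trans hn)).symm
  have hz : Λ.deg z = (n - m) + (Λ.deg z - (n - m)) :=
    (add_tsub_cancel_of_le (hdz ▸ tsub_le_tsub_right hn m)).symm
  obtain ⟨⟨b, y⟩, ⟨hdb, -, hby, rfl⟩, -⟩ := Λ.factor z _ _ hz
  exact ⟨b, hdb, x, y, hdx, by rw [hxz, Λ.rng_comp b y hby], hby, rfl⟩

theorem isSegment_seg (a : Λ.Mor) {m n : Fin k → ℕ} (hmn : m ≤ n) (hn : n ≤ Λ.deg a) :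
    Λ.IsSegment a m n (Λ.seg a m n) := by
  have h := exists_isSegment a hmn hn
  unfold IsSegment at h ⊢
  rw [seg, dif_pos h]
  exact h.choose_spec

theorem IsSegment.seg_eq {a b : Λ.Mor} {m n : Fin k → ℕ} (hb : Λ.IsSegment a m n b)
    (hmn : m ≤ n) (hn : n ≤ Λ.deg a) : Λ.seg a m n = b :=
  (isSegment_seg a hmn hn).unique hb

theorem deg_seg (a : Λ.Mor) {m n : Fin k → ℕ} (hmn : m ≤ n) (hn : n ≤ Λ.deg a) :
    Λ.deg (Λ.seg a m n) = n - m :=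
  (isSegment_seg a hmn hn).1

theorem IsSegment.trans {a c c' : Λ.Mor} {m n p q : Fin k → ℕ} (hc' : Λ.IsSegment a m n c')
    (hc : Λ.IsSegment c' p q c) : Λ.IsSegment a (m + p) (m + q) c := by
  obtain ⟨-, x', y', hdx', hx'c', hc'y', rfl⟩ := hc'
  obtain ⟨hdc, u, w, hdu, huc, hcw, rfl⟩ := hc
  have hu : Λ.src u = Λ.rng (Λ.comp c w) := by rw [Λ.rng_comp c w hcw, huc]
  have hx'u : Λ.src x' = Λ.rng u := by rw [hx'c', Λ.rng_comp u _ hu]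
  have hwy' : Λ.src w = Λ.rng y' := by
    rw [← hc'y', Λ.src_comp u _ hu, Λ.src_comp c w hcw]
  have hcwy' : Λ.src (Λ.comp c w) = Λ.rng y' := by rw [Λ.src_comp c w hcw, hwy']
  have hu' : Λ.src u = Λ.rng (Λ.comp c (Λ.comp w y')) := by
    rw [Λ.rng_comp c _ (by rw [Λ.rng_comp w y' hwy', hcw]), huc]
  refine ⟨by rw [hdc, add_tsub_add_eq_tsub_left], Λ.comp x' u, Λ.comp w y',
    by rw [Λ.deg_comp x' u hx'u, hdx', hdu], by rw [Λ.src_comp x' u hx'u, huc],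
    by rw [Λ.rng_comp w y' hwy', hcw], ?_⟩
  rw [Λ.comp_assoc u _ y' hu hcwy', Λ.comp_assoc c w y' hcw hwy', Λ.comp_assoc x' u _ hx'u hu']

theorem seg_seg (a : Λ.Mor) {m n m' n' : Fin k → ℕ} (hm : m ≤ m') (hmn' : m' ≤ n')
    (hn' : n' ≤ n) (hn : n ≤ Λ.deg a) :
    Λ.seg (Λ.seg a m n) (m' - m) (n' - m) = Λ.seg a m' n' := by
  have hc' := isSegment_seg a (hm.trans (hmn'.trans hn')) hn
  have hc := isSegment_seg (Λ.seg a m n) (tsub_le_tsub_right hmn' m)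
    (by rw [hc'.1]; exact tsub_le_tsub_right hn' m)
  have := hc'.trans hc
  rw [add_tsub_cancel_of_le hm, add_tsub_cancel_of_le (hm.trans hmn')] at this
  exact (this.seg_eq hmn' (hn'.trans hn)).symm

end KGraph

namespace KGraphHom

variable {k : ℕ} {Λ Γ : KGraph k}

theorem map_isSegment (φ : KGraphHom Λ Γ) {a b : Λ.Mor} {m n : Fin k → ℕ}
    (hb : Λ.IsSegment a m n b) : Γ.IsSegment (φ.toFun a) m n (φ.toFun b) := by
  obtain ⟨hdb, x, y, hdx, hxb, hby, rfl⟩ := hb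
  refine ⟨by rw [φ.map_deg, hdb], φ.toFun x, φ.toFun y, by rw [φ.map_deg, hdx],
    by rw [← φ.map_src, ← φ.map_rng, hxb], by rw [← φ.map_src, ← φ.map_rng, hby], ?_⟩
  rw [φ.map_comp _ _ (by rw [Λ.rng_comp b y hby, hxb]), φ.map_comp _ _ hby]

theorem map_seg (φ : KGraphHom Λ Γ) (a : Λ.Mor) {m n : Fin k → ℕ} (hmn : m ≤ n)
    (hn : n ≤ Λ.deg a) : Γ.seg (φ.toFun a) m n = φ.toFun (Λ.seg a m n) :=
  (φ.map_isSegment (KGraph.isSegment_seg a hmn hn)).seg_eq hmn (by rwa [φ.map_deg])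

end KGraphHom

namespace KGraph

variable {k : ℕ} {Λ : KGraph k}

section Floor

variable {t : Fin k → ℝ} {m n : Fin k → ℕ}

theorem fl_apply (t : Fin k → ℝ) (i : Fin k) : fl t i = ⌊t i⌋₊ := Int.floor_toNat _

theorem ce_apply (t : Fin k → ℝ) (i : Fin k) : ce t i = ⌈t i⌉₊ := Int.ceil_toNat _

theorem fl_le_ce (t : Fin k → ℝ) : fl t ≤ ce t := fun i => by
  rw [fl_apply, ce_apply]
  exact Nat.floor_le_ceil _

theorem ce_le_of_le (h : ∀ i, t i ≤ n i) : ce t ≤ n := fun i => by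
  rw [ce_apply]
  exact Nat.ceil_le.2 (h i)

theorem fl_sub_natCast (t : Fin k → ℝ) (m : Fin k → ℕ) : fl (fun i => t i - m i) = fl t - m :=
  funext fun i => by simp only [fl_apply, Nat.floor_sub_natCast, Pi.sub_apply]

theorem ce_sub_natCast (t : Fin k → ℝ) (m : Fin k → ℕ) : ce (fun i => t i - m i) = ce t - m :=
  funext fun i => by simp only [ce_apply, Nat.ceil_sub_natCast, Pi.sub_apply]

theorem frac_sub_natCast (hm : m ≤ fl t) : frac (fun i => t i - m i) = frac t := funext fun i => by
  change t i - m i - (fl (fun j => t j - m j) i : ℝ) = t i - fl t i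
  rw [fl_sub_natCast, Pi.sub_apply, Nat.cast_sub (hm i)]
  ring

theorem sub_natCast_mem_Icc (h0 : ∀ i, 0 ≤ t i) (hm : m ≤ fl t) (hn : ce t ≤ n) (i : Fin k) :
    0 ≤ t i - m i ∧ t i - m i ≤ ((n - m) i : ℕ) := by
  have hfl : (m i : ℝ) ≤ t i := (Nat.cast_le.2 (hm i)).trans (fl_apply t i ▸ Nat.floor_le (h0 i))
  have hce : t i ≤ n i := (Nat.le_ceil _).trans (Nat.cast_le.2 (ce_apply t i ▸ hn i))
  rw [Pi.sub_apply, Nat.cast_sub (Nat.cast_le.1 (hfl.trans hce))]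
  constructor <;> linarith

theorem eventually_fl_le_and_ce_le (t : Fin k → ℝ) :
    ∀ᶠ t' in 𝓝 t, fl t' ≤ fl t ∧ ce t ≤ ce t' := by
  have hfl : ∀ i, ∀ᶠ t' in 𝓝 t, fl t' i ≤ fl t i := fun i => by
    filter_upwards [(continuous_apply i).continuousAt.eventually_lt continuousAt_const
      (Nat.lt_floor_add_one (t i))] with t' ht'
    rw [fl_apply, fl_apply, ← Nat.lt_succ_iff, Nat.floor_lt' (Nat.succ_ne_zero _)]
    exact_mod_cast ht'
  have hce : ∀ i, ∀ᶠ t' in 𝓝 t, ce t i ≤ ce t' i := fun i => by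
    rcases Nat.eq_zero_or_pos (ce t i) with h | h
    · simp [h]
    have hlt : ((ce t i - 1 : ℕ) : ℝ) < t i := Nat.lt_ceil.1 (ce_apply t i ▸ by omega)
    filter_upwards [continuousAt_const.eventually_lt (continuous_apply i).continuousAt hlt]
      with t' ht'
    have := Nat.lt_ceil.2 ht'
    rw [← ce_apply] at this
    omega
  filter_upwards [Filter.eventually_all.2 hfl, Filter.eventually_all.2 hce] with t' h1 h2
  exact ⟨h1, h2⟩

end Floor

theorem ptRel_seg_sub {a : Λ.Mor} {t : Fin k → ℝ} (ht : ∀ i, 0 ≤ t i ∧ t i ≤ Λ.deg a i)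
    {m n : Fin k → ℕ} (hm : m ≤ fl t) (hn : ce t ≤ n) (hna : n ≤ Λ.deg a)
    (h : ∀ i, 0 ≤ t i - m i ∧ t i - m i ≤ Λ.deg (Λ.seg a m n) i) :
    Λ.ptRel ⟨Λ.seg a m n, ⟨fun i => t i - m i, h⟩⟩ ⟨a, ⟨t, ht⟩⟩ := by
  refine ⟨?_, frac_sub_natCast hm⟩
  change Λ.seg _ (fl fun i => t i - m i) (ce fun i => t i - m i) = _
  rw [fl_sub_natCast, ce_sub_natCast]
  exact seg_seg a hm (fl_le_ce t) hn hna

theorem sub_natCast_mem_deg_seg {a : Λ.Mor} {t : Fin k → ℝ}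
    (ht : ∀ i, 0 ≤ t i ∧ t i ≤ Λ.deg a i) {m n : Fin k → ℕ} (hm : m ≤ fl t) (hn : ce t ≤ n)
    (hna : n ≤ Λ.deg a) (i : Fin k) :
    0 ≤ t i - m i ∧ t i - m i ≤ Λ.deg (Λ.seg a m n) i := by
  rw [deg_seg a (hm.trans ((fl_le_ce t).trans hn)) hna]
  exact sub_natCast_mem_Icc (fun i => (ht i).1) hm hn i

theorem ce_le_deg (p : Λ.Points) : ce p.2.1 ≤ Λ.deg p.1 := ce_le_of_le fun i => (p.2.2 i).2

noncomputable def canon (p : Λ.Points) : Λ.Points :=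
  ⟨Λ.seg p.1 (fl p.2.1) (ce p.2.1), ⟨frac p.2.1,
    sub_natCast_mem_deg_seg p.2.2 le_rfl le_rfl (ce_le_deg p)⟩⟩

theorem ptRel_canon (p : Λ.Points) : Λ.ptRel (Λ.canon p) p :=
  ptRel_seg_sub p.2.2 le_rfl le_rfl (ce_le_deg p) _

theorem canon_eq_of_ptRel {p q : Λ.Points} (h : Λ.ptRel p q) : Λ.canon p = Λ.canon q :=
  Sigma.subtype_ext h.1 h.2

def Points.toReal (p : Λ.Points) : Λ.Real := Quotient.mk _ p

theorem Points.toReal_eq_toReal_iff {p q : Λ.Points} : p.toReal = q.toReal ↔ Λ.ptRel p q :=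
  Quotient.eq

theorem isQuotientMap_toReal : IsQuotientMap (Points.toReal : Λ.Points → Λ.Real) :=
  isQuotientMap_quotient_mk'

theorem toReal_canon (p : Λ.Points) : (Λ.canon p).toReal = p.toReal :=
  Points.toReal_eq_toReal_iff.2 (Λ.ptRel_canon p)

theorem toReal_out (x : Λ.Real) : x.out.toReal = x := Quotient.out_eq x

end KGraph

namespace KGraphHom

open KGraph

variable {k : ℕ} {Λ Γ : KGraph k}

theorem ptRel_pointMap (φ : KGraphHom Λ Γ) {p q : Λ.Points} (h : Λ.ptRel p q) :
    Γ.ptRel (φ.pointMap p) (φ.pointMap q) := by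
  refine ⟨?_, h.2⟩
  change Γ.seg (φ.toFun p.1) (fl p.2.1) (ce p.2.1) = Γ.seg (φ.toFun q.1) (fl q.2.1) (ce q.2.1)
  rw [φ.map_seg _ (fl_le_ce _) (ce_le_deg p), φ.map_seg _ (fl_le_ce _) (ce_le_deg q), h.1]

theorem real_toReal (φ : KGraphHom Λ Γ) (p : Λ.Points) :
    φ.real p.toReal = (φ.pointMap p).toReal :=
  Points.toReal_eq_toReal_iff.2 (φ.ptRel_pointMap (Points.toReal_eq_toReal_iff.1 (toReal_out p.toReal)))

theorem pointMap_canon (φ : KGraphHom Λ Γ) (p : Λ.Points) :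
    φ.pointMap (Λ.canon p) = Γ.canon (φ.pointMap p) :=
  Sigma.subtype_ext (φ.map_seg _ (fl_le_ce _) (ce_le_deg p)).symm rfl

end KGraphHom

theorem continuous_sigma_mk_subtype {X ι Y : Type*} [TopologicalSpace X] [TopologicalSpace Y]
    {P : ι → Y → Prop} {g : X → ι} {h : X → Y} (hP : ∀ x, P (g x) (h x))
    (hg : IsLocallyConstant g) (hh : Continuous h) :
    Continuous fun x => (⟨g x, ⟨h x, hP x⟩⟩ : Σ i, {y // P i y}) := by
  refine continuous_iff_continuousAt.2 fun x₀ => ?_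
  have hU : IsOpen (g ⁻¹' {g x₀}) := hg.isOpen_fiber _
  refine ContinuousOn.continuousAt ?_ (hU.mem_nhds rfl)
  rw [continuousOn_iff_continuous_domRestrict]
  have hx : ∀ x ∈ g ⁻¹' {g x₀}, P (g x₀) (h x) := fun x hx => (hx : g x = g x₀) ▸ hP x
  exact ((continuous_sigmaMk (σ := fun i => {y // P i y})).comp
    ((hh.comp continuous_subtype_val).subtype_mk fun x => hx x x.2)).congr
    fun x => Sigma.subtype_ext (x.2 : g x = g x₀).symm rfl

theorem isOpen_sigma_subtype {ι Y : Type*} [TopologicalSpace Y] {P : ι → Y → Prop}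
    {S : Set (Σ i, {y // P i y})}
    (hS : ∀ p ∈ S, ∀ᶠ y in 𝓝 p.2.1, ∀ h : P p.1 y, ⟨p.1, ⟨y, h⟩⟩ ∈ S) : IsOpen S := by
  refine isOpen_sigma_iff.2 fun i => isOpen_iff_eventually.2 fun y hy => ?_
  filter_upwards [(continuous_subtype_val.tendsto y).eventually (hS _ hy)] with z hz
  exact hz z.2

theorem IsCompact.eventually_forall_add_mem {X E : Type*} [TopologicalSpace X] [TopologicalSpace E]
    [AddZeroClass E] [ContinuousAdd E] {P : X × E → Prop} {K V : Set (Subtype P)}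
    (hK : IsCompact K) (hV : IsOpen V) (hKV : K ⊆ V) :
    ∀ᶠ e in 𝓝 (0 : E), ∀ p ∈ K, ∀ q : Subtype P, q.1.1 = p.1.1 → q.1.2 = p.1.2 + e → q ∈ V := by
  obtain ⟨V', hV', rfl⟩ := isOpen_induced_iff.1 hV
  refine hK.eventually_forall_of_forall_eventually fun p hp => ?_
  have hcont : Continuous fun z : E × Subtype P => (z.2.1.1, z.2.1.2 + z.1) := by fun_prop
  have hp' : (p.1.1, p.1.2 + 0) ∈ V' := by simpa using hKV hp
  filter_upwards [hcont.continuousAt.preimage_mem_nhds (hV'.mem_nhds hp')] with z hz q h1 h2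
  change q.1 ∈ V'
  rwa [show q.1 = (z.2.1.1, z.2.1.2 + z.1) from Prod.ext h1 h2]

section InverseSystem

variable {α : ℕ → Type*} {f : ∀ n, α (n + 1) → α n}

theorem eq_of_coherent_of_le {g g' : ∀ n, α n} (hg : ∀ n, f n (g (n + 1)) = g n)
    (hg' : ∀ n, f n (g' (n + 1)) = g' n) {m N : ℕ} (hmN : m ≤ N) (h : g N = g' N) : g m = g' m := by
  induction N, hmN using Nat.le_induction with
  | base => exact h
  | succ N _ ih => exact ih (by rw [← hg, ← hg', h])

theorem finite_setOf_coherent_apply (hf : ∀ n b, {a | f n a = b}.Finite) (N : ℕ) (c : α N)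
    (n : ℕ) : {a | ∃ g : ∀ n, α n, (∀ n, f n (g (n + 1)) = g n) ∧ g N = c ∧ g n = a}.Finite := by
  rcases le_total n N with hnN | hNn
  · refine Set.Subsingleton.finite ?_
    rintro _ ⟨g, hg, hgc, rfl⟩ _ ⟨g', hg', hgc', rfl⟩
    exact eq_of_coherent_of_le hg hg' hnN (hgc.trans hgc'.symm)
  induction n, hNn using Nat.le_induction with
  | base => exact (Set.finite_singleton c).subset (by rintro _ ⟨g, -, hgc, rfl⟩; exact hgc)
  | succ n _ ih =>
    refine (ih.preimage' fun b _ => hf n b).subset ?_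
    rintro _ ⟨g, hg, hgc, rfl⟩
    exact ⟨g, hg, hgc, (hg n).symm⟩

end InverseSystem

namespace LimPoints

open KGraph

variable {k : ℕ} {Λs : ℕ → KGraph k} {ps : ∀ n, KGraphHom (Λs (n + 1)) (Λs n)}

theorem deg_eq (w : LimPoints Λs ps) (n : ℕ) : (Λs n).deg (w.1.1 n) = (Λs 0).deg (w.1.1 0) := by
  induction n with
  | zero => rfl
  | succ n ih => rw [← ih, ← w.2.1 n, (ps n).map_deg]

def level (w : LimPoints Λs ps) (n : ℕ) : (Λs n).Points :=
  ⟨w.1.1 n, ⟨w.1.2, fun i => by rw [w.deg_eq n]; exact w.2.2 i⟩⟩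

theorem pointMap_level (w : LimPoints Λs ps) (n : ℕ) :
    (ps n).pointMap (w.level (n + 1)) = w.level n :=
  Sigma.subtype_ext (w.2.1 n) rfl

noncomputable def toRealLim (w : LimPoints Λs ps) : RealLim Λs ps :=
  ⟨fun n => (w.level n).toReal, fun n => by rw [(ps n).real_toReal, pointMap_level]⟩

def toLimReal (w : LimPoints Λs ps) : LimReal Λs ps := Quotient.mk _ w

theorem toLimReal_eq_toLimReal_iff {w w' : LimPoints Λs ps} :
    w.toLimReal = w'.toLimReal ↔ limRel Λs ps w w' :=
  Quotient.eq

theorem limRel_iff_toRealLim_eq {w w' : LimPoints Λs ps} :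
    limRel Λs ps w w' ↔ w.toRealLim = w'.toRealLim := by
  refine ⟨fun h => Subtype.ext (funext fun n => Points.toReal_eq_toReal_iff.2 ⟨h.1 n, h.2⟩),
    fun h => ?_⟩
  have hn (n : ℕ) : (Λs n).ptRel (w.level n) (w'.level n) :=
    Points.toReal_eq_toReal_iff.1 (congrArg (fun y : RealLim Λs ps => y.1 n) h)
  exact ⟨fun n => (hn n).1, (hn 0).2⟩

noncomputable def canon (w : LimPoints Λs ps) : LimPoints Λs ps :=
  ⟨(fun n => ((Λs n).canon (w.level n)).1, frac w.1.2),
    fun n => congrArg Sigma.fst (((ps n).pointMap_canon _).trans (by rw [pointMap_level])),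
    ((Λs 0).canon (w.level 0)).2.2⟩

theorem toLimReal_canon (w : LimPoints Λs ps) : w.canon.toLimReal = w.toLimReal :=
  toLimReal_eq_toLimReal_iff.2 ⟨fun n => ((Λs n).ptRel_canon (w.level n)).1,
    ((Λs 0).ptRel_canon (w.level 0)).2⟩

theorem toRealLim_surjective :
    Function.Surjective (toRealLim : LimPoints Λs ps → RealLim Λs ps) := by
  rintro ⟨x, hx⟩
  set q : ∀ n, (Λs n).Points := fun n => (Λs n).canon (x n).out
  have hq (n : ℕ) : (ps n).pointMap (q (n + 1)) = q n := by
    rw [(ps n).pointMap_canon]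
    refine canon_eq_of_ptRel (Points.toReal_eq_toReal_iff.1 ?_)
    rw [← (ps n).real_toReal, toReal_out, toReal_out, hx n]
  have ht (n : ℕ) : (q n).2.1 = (q 0).2.1 := by
    induction n with
    | zero => rfl
    | succ n ih => rw [← ih, ← hq n]; rfl
  let w : LimPoints Λs ps :=
    ⟨(fun n => (q n).1, (q 0).2.1), fun n => congrArg Sigma.fst (hq n), (q 0).2.2⟩
  refine ⟨w, Subtype.ext (funext fun n => ?_)⟩
  change (w.level n).toReal = x n
  rw [show w.level n = q n from Sigma.subtype_ext rfl (ht n).symm, toReal_canon, toReal_out]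

theorem continuous_val :
    Continuous (Subtype.val : LimPoints Λs ps → (∀ n, (Λs n).Mor) × (Fin k → ℝ)) :=
  continuous_subtype_val

theorem continuous_level (n : ℕ) : Continuous fun w : LimPoints Λs ps => w.level n := by
  unfold level
  exact continuous_sigma_mk_subtype (P := fun a t => ∀ i, 0 ≤ t i ∧ t i ≤ ((Λs n).deg a i : ℝ))
    (g := fun w : LimPoints Λs ps => w.1.1 n) (h := fun w => w.1.2) (fun w => (w.level n).2.2)
    ((IsLocallyConstant.iff_continuous _).2
      ((continuous_apply n).comp (continuous_fst.comp continuous_val)))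
    (continuous_snd.comp continuous_val)

theorem continuous_toRealLim : Continuous (toRealLim : LimPoints Λs ps → RealLim Λs ps) :=
  (continuous_pi fun n => continuous_quot_mk.comp (continuous_level n)).subtype_mk _

theorem exists_forall_mem_of_isOpen {V : Set (LimPoints Λs ps)} (hV : IsOpen V)
    {w : LimPoints Λs ps} (hw : w ∈ V) :
    ∃ L, ∀ w' : LimPoints Λs ps, w'.1.1 L = w.1.1 L → w'.1.2 = w.1.2 → w' ∈ V := by
  obtain ⟨V', hV', rfl⟩ := isOpen_induced_iff.1 hV
  have hS : IsOpen {g | (g, w.1.2) ∈ V'} := hV'.preimage (by fun_prop)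
  obtain ⟨I, u, hu, hIu⟩ := isOpen_pi_iff.1 hS w.1.1 hw
  refine ⟨I.sup id, fun w' hL ht => ?_⟩
  change (w'.1.1, w'.1.2) ∈ V'
  rw [ht]
  refine hIu fun m hm => ?_
  exact eq_of_coherent_of_le w'.2.1 w.2.1 (Finset.le_sup (f := id) hm : m ≤ I.sup id) hL ▸
    (hu m hm).2

theorem isClosedEmbedding_val :
    IsClosedEmbedding (Subtype.val : LimPoints Λs ps → (∀ n, (Λs n).Mor) × (Fin k → ℝ)) := by
  refine .subtypeVal ?_
  simp only [Set.ofPred_and, Set.ofPred_forall]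
  refine (isClosed_iInter fun n => isClosed_eq ?_ (by fun_prop)).inter
    (isClosed_iInter fun i => (isClosed_le (by fun_prop) (by fun_prop)).inter
      (isClosed_le (by fun_prop) ?_)) <;>
    exact continuous_of_discreteTopology.comp (by fun_prop)

theorem isCompact_fiber (hfin : ∀ n (b : (Λs n).Mor), { a | (ps n).toFun a = b }.Finite)
    (N : ℕ) (c : (Λs N).Mor) (u : Fin k → ℝ) :
    IsCompact {w : LimPoints Λs ps | w.1.1 N = c ∧ w.1.2 = u} := by
  set T := fun n => {a | ∃ g : ∀ n, (Λs n).Mor,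
    (∀ n, (ps n).toFun (g (n + 1)) = g n) ∧ g N = c ∧ g n = a}
  have hC : IsCompact ((Set.univ.pi T) ×ˢ {u} ∩ {ft | ft.1 N = c}) :=
    ((isCompact_univ_pi fun n => (finite_setOf_coherent_apply hfin N c n).isCompact).prod
      isCompact_singleton).inter_right (isClosed_eq (by fun_prop) continuous_const)
  have e : {w : LimPoints Λs ps | w.1.1 N = c ∧ w.1.2 = u} =
      (Subtype.val : LimPoints Λs ps → _) ⁻¹' ((Set.univ.pi T) ×ˢ {u} ∩ {ft | ft.1 N = c}) :=
    Set.ext fun w => ⟨fun ⟨hc, hu⟩ => ⟨⟨fun n _ => ⟨w.1.1, w.2.1, hc, rfl⟩, hu⟩, hc⟩,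
      fun ⟨⟨_, hu⟩, hc⟩ => ⟨hc, hu⟩⟩
  rw [e]
  exact isClosedEmbedding_val.isCompact_preimage hC

theorem eventually_mem_kernImage (hfin : ∀ n (b : (Λs n).Mor), { a | (ps n).toFun a = b }.Finite)
    {U : Set (LimReal Λs ps)} (hU : IsOpen U) {N : ℕ} {a : (Λs N).Mor} {t : Fin k → ℝ}
    (ht : ∀ i, 0 ≤ t i ∧ t i ≤ ((Λs N).deg a i : ℝ))
    (h : Points.toReal ⟨a, ⟨t, ht⟩⟩ ∈ (toLimReal ⁻¹' U).kernImage fun w => (w.level N).toReal) :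
    ∀ᶠ t' in 𝓝 t, ∀ ht' : ∀ i, 0 ≤ t' i ∧ t' i ≤ ((Λs N).deg a i : ℝ),
      Points.toReal ⟨a, ⟨t', ht'⟩⟩ ∈ (toLimReal ⁻¹' U).kernImage fun w => (w.level N).toReal := by
  set W := {mn : (Fin k → ℕ) × (Fin k → ℕ) | mn.1 ≤ fl t ∧ ce t ≤ mn.2 ∧ mn.2 ≤ (Λs N).deg a}
  have hW : W.Finite :=
    ((Set.finite_Iic (fl t)).prod (Set.finite_Iic ((Λs N).deg a))).subset fun mn h => ⟨h.1, h.2.2⟩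
  set K := ⋃ mn ∈ W, {w : LimPoints Λs ps |
    w.1.1 N = (Λs N).seg a mn.1 mn.2 ∧ w.1.2 = fun i => t i - mn.1 i}
  have hKU : K ⊆ toLimReal ⁻¹' U := by
    simp only [K, Set.iUnion_subset_iff]
    rintro ⟨m, n⟩ ⟨hm, hn, hna⟩ w ⟨hwN, hwt⟩
    refine h (Points.toReal_eq_toReal_iff.2 ?_)
    rw [show w.level N = ⟨_, ⟨_, sub_natCast_mem_deg_seg ht hm hn hna⟩⟩ from
      Sigma.subtype_ext hwN hwt]
    exact ptRel_seg_sub ht hm hn hna _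
  have hshift := ((continuous_sub_right t).tendsto' t 0 (sub_self t)).eventually
    ((hW.isCompact_biUnion fun mn _ => isCompact_fiber hfin N _ _).eventually_forall_add_mem
      (hU.preimage continuous_quot_mk) hKU)
  filter_upwards [eventually_fl_le_and_ce_le t, hshift] with t' ⟨hfl, hce⟩ hnear ht' w hw
  have hrel : (Λs N).ptRel (w.level N) ⟨a, ⟨t', ht'⟩⟩ := Points.toReal_eq_toReal_iff.1 hw
  have hseg : w.canon.1.1 N = (Λs N).seg a (fl t') (ce t') := hrel.1
  have hfrac : frac w.1.2 = frac t' := hrel.2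
  have hna : ce t' ≤ (Λs N).deg a := ce_le_of_le fun i => (ht' i).2
  rw [Set.mem_preimage, ← toLimReal_canon]
  -- `w.canon` lies over `a(⌊t'⌋, ⌈t'⌉)` with real coordinate `t' - ⌊t'⌋`: it is the point `w₀ ∈ K`
  -- shifted by `t' - t`.
  let w₀ : LimPoints Λs ps := ⟨(w.canon.1.1, fun i => t i - (fl t' i : ℝ)), w.canon.2.1, fun i => by
    rw [← w.canon.deg_eq N, hseg]
    exact sub_natCast_mem_deg_seg ht hfl hce hna i⟩
  refine hnear w₀ (Set.mem_biUnion (x := (fl t', ce t')) ⟨hfl, hce, hna⟩ ⟨hseg, rfl⟩) _ rfl ?_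
  funext i
  change frac w.1.2 i = t i - fl t' i + (t' i - t i)
  rw [hfrac]
  change t' i - fl t' i = _
  ring

theorem isOpen_kernImage (hfin : ∀ n (b : (Λs n).Mor), { a | (ps n).toFun a = b }.Finite)
    {U : Set (LimReal Λs ps)} (hU : IsOpen U) (N : ℕ) :
    IsOpen ((toLimReal ⁻¹' U).kernImage fun w : LimPoints Λs ps => (w.level N).toReal) := by
  rw [← isQuotientMap_toReal.isOpen_preimage]
  exact isOpen_sigma_subtype fun ⟨a, ⟨t, ht⟩⟩ h => eventually_mem_kernImage hfin hU ht h

end LimPoints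

section LimRealEquiv

open LimPoints KGraph

variable {k : ℕ} (Λs : ℕ → KGraph k) (ps : ∀ n, KGraphHom (Λs (n + 1)) (Λs n))

/-- The map `π̃_∞`. -/
noncomputable def limRealEquiv : LimReal Λs ps ≃ RealLim Λs ps :=
  Equiv.ofBijective (Quotient.lift toRealLim fun _ _ h => limRel_iff_toRealLim_eq.1 h)
    ⟨fun x y => Quotient.inductionOn₂ x y fun _ _ h => Quotient.sound (limRel_iff_toRealLim_eq.2 h),
      fun y => by
        obtain ⟨w, rfl⟩ := toRealLim_surjective y
        exact ⟨w.toLimReal, rfl⟩⟩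

variable {Λs ps}

theorem continuous_limRealEquiv : Continuous (limRealEquiv Λs ps) :=
  continuous_toRealLim.quotient_lift _

theorem isOpenMap_limRealEquiv
    (hfin : ∀ n (b : (Λs n).Mor), { a | (ps n).toFun a = b }.Finite) :
    IsOpenMap (limRealEquiv Λs ps) := by
  intro U hU
  rw [isOpen_iff_forall_mem_open]
  rintro _ ⟨ξ, hξ, rfl⟩
  obtain ⟨w, rfl⟩ := Quotient.mk_surjective ξ
  obtain ⟨L, hL⟩ := exists_forall_mem_of_isOpen (hU.preimage continuous_quot_mk)
    (show w.canon ∈ toLimReal ⁻¹' U by rwa [Set.mem_preimage, toLimReal_canon])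
  refine ⟨(fun y : RealLim Λs ps => y.1 L) ⁻¹'
      (toLimReal ⁻¹' U).kernImage fun w : LimPoints Λs ps => (w.level L).toReal,
    fun y hy => ?_, (isOpen_kernImage hfin hU L).preimage ?_, fun w' hw' => ?_⟩
  · obtain ⟨w', rfl⟩ := toRealLim_surjective y
    exact ⟨w'.toLimReal, hy rfl, rfl⟩
  · exact (continuous_apply L).comp continuous_subtype_val
  · have hrel : (Λs L).ptRel (w'.level L) (w.level L) := Points.toReal_eq_toReal_iff.1 hw'
    rw [Set.mem_preimage, ← toLimReal_canon]
    exact hL w'.canon hrel.1 hrel.2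

end LimRealEquiv

theorem realization_of_projective_limit_general
    {k : ℕ} (Λs : ℕ → KGraph k) (ps : ∀ n, KGraphHom (Λs (n + 1)) (Λs n))
    (hfin : ∀ n (b : (Λs n).Mor), { a | (ps n).toFun a = b }.Finite) :
    ∃ h : LimReal Λs ps ≃ₜ RealLim Λs ps,
      ∀ (f : ∀ n, (Λs n).Mor) (hf : ∀ n, (ps n).toFun (f (n + 1)) = f n)
        (t : Fin k → ℝ)
        (ht : ∀ i, 0 ≤ t i ∧ t i ≤ ((Λs 0).deg (f 0) i : ℝ))
        (htn : ∀ n i, 0 ≤ t i ∧ t i ≤ ((Λs n).deg (f n) i : ℝ))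
        (hcomp : ∀ n, (ps n).real
            ((Λs (n + 1)).pt (f (n + 1)) t (htn (n + 1))) =
          (Λs n).pt (f n) t (htn n)),
        h (limPt Λs ps f hf t ht) = ⟨fun n => (Λs n).pt (f n) t (htn n), hcomp⟩ :=
  ⟨(limRealEquiv Λs ps).toHomeomorphOfContinuousOpen continuous_limRealEquiv
    (isOpenMap_limRealEquiv hfin), fun _ _ _ _ _ _ => rfl⟩

/-- Given row-finite `k`-graphs `Λ_n` with no sources and
finite-to-one coverings `p_n : Λ_n → Λ_{n-1}`, there is a homeomorphism
`π̃_∞ : X_{lim←(Λ_n,p_n)} → lim←(X_{Λ_n}, p̃_n)` satisfying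
`π̃_∞([(λ_i)_i, t]) = ([λ_i, t])_i`. -/
theorem realization_of_projective_limit
    {k : ℕ} (Λs : ℕ → KGraph k) (ps : ∀ n, KGraphHom (Λs (n + 1)) (Λs n))
    (hrow : ∀ n, (Λs n).RowFiniteNoSources)
    (hcov : ∀ n, (ps n).IsCovering)
    (hfin : ∀ n (b : (Λs n).Mor), { a | (ps n).toFun a = b }.Finite) :
    ∃ h : LimReal Λs ps ≃ₜ RealLim Λs ps,
      ∀ (f : ∀ n, (Λs n).Mor) (hf : ∀ n, (ps n).toFun (f (n + 1)) = f n)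
        (t : Fin k → ℝ)
        (ht : ∀ i, 0 ≤ t i ∧ t i ≤ ((Λs 0).deg (f 0) i : ℝ))
        (htn : ∀ n i, 0 ≤ t i ∧ t i ≤ ((Λs n).deg (f n) i : ℝ))
        (hcomp : ∀ n, (ps n).real
            ((Λs (n + 1)).pt (f (n + 1)) t (htn (n + 1))) =
          (Λs n).pt (f n) t (htn n)),
        h (limPt Λs ps f hf t ht) = ⟨fun n => (Λs n).pt (f n) t (htn n), hcomp⟩ :=
  realization_of_projective_limit_general Λs ps hfin
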